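/- For each k ≥ 1, there exists a strong USP of size 2^{k−1}(2^k + 1) and width 3k. -/
import Mathlib


/-- Exactly two of three propositions hold. -/
def ExactlyTwo (P Q R : Prop) : Prop :=
  (P ∧ Q ∧ ¬R) ∨ (P ∧ ¬Q ∧ R) ∨ (¬P ∧ Q ∧ R)

/-- A strong USP of width `w` (symbols `1,2,3` represented by `0,1,2 : Fin 3`). -/
def IsStrongUSP {w : ℕ} (U : Set (Fin w → Fin 3)) : Prop :=
  ∀ π₁ π₂ π₃ : Equiv.Perm U, (π₁ = π₂ ∧ π₂ = π₃) ∨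
    ∃ u : U, ∃ i : Fin w,
      ExactlyTwo (((π₁ u : U) : Fin w → Fin 3) i = 0)
        (((π₂ u : U) : Fin w → Fin 3) i = 1)
        (((π₃ u : U) : Fin w → Fin 3) i = 2)


namespace USPaux

/-- binary decode helper -/
theorem sum_testBit (k x : ℕ) (h : x < 2^k) :
    ∑ i : Fin k, (if x.testBit i then 2^(i:ℕ) else 0) = x := by
  induction k generalizing x with
  | zero => interval_cases x; simp
  | succ k ih =>
    rw [Fin.sum_univ_succ]
    have h2 : x / 2 < 2^k := by omega
    have hih := ih (x/2) h2
    have e : ∀ i : Fin k, (if x.testBit (i.succ) then 2^((i.succ : Fin (k+1)):ℕ) else 0)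
        = 2 * (if (x/2).testBit i then 2^(i:ℕ) else 0) := by
      intro i
      rw [show ((i.succ : Fin (k+1)):ℕ) = (i:ℕ)+1 from rfl, Nat.testBit_succ]
      split <;> ring
    rw [Finset.sum_congr rfl (fun i _ => e i), ← Finset.mul_sum, hih]
    rcases Nat.mod_two_eq_zero_or_one x with h0 | h0 <;> simp [Nat.testBit_zero, h0] <;> omega

theorem le_of_testBit {x y : ℕ} (h : ∀ i, x.testBit i = true → y.testBit i = true) : x ≤ y := by
  have hx : x = x &&& y := Nat.eq_of_testBit_eq fun i => by
    rw [Nat.testBit_and]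
    cases hb : x.testBit i
    · simp
    · simp [h i hb]
  rw [hx]; exact Nat.and_le_right

variable (k : ℕ)

def idx1 (i : Fin k) : Fin (3*k) := ⟨i, by omega⟩
def idx2 (i : Fin k) : Fin (3*k) := ⟨k + i, by omega⟩
def idx3 (i : Fin k) : Fin (3*k) := ⟨2*k + i, by omega⟩

def enc (a b : ℕ) : Fin (3*k) → Fin 3 := fun i =>
  if (i:ℕ) < k then (if a.testBit i then 1 else 0)
  else if (i:ℕ) < 2*k then (if b.testBit ((i:ℕ) - k) then 2 else 1)
  else (if (2^k - 1 - a - b).testBit ((i:ℕ) - 2*k) then 2 else 0)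

theorem enc_idx1 (a b : ℕ) (i : Fin k) :
    enc k a b (idx1 k i) = if a.testBit i then 1 else 0 := by
  have : ((idx1 k i : Fin (3*k)) : ℕ) = (i:ℕ) := rfl
  simp only [enc, this, i.isLt, if_pos]

theorem enc_idx2 (a b : ℕ) (i : Fin k) :
    enc k a b (idx2 k i) = if b.testBit i then 2 else 1 := by
  have h1 : ((idx2 k i : Fin (3*k)) : ℕ) = k + (i:ℕ) := rfl
  have hi := i.isLt
  simp only [enc, h1]
  rw [if_neg (by omega), if_pos (by omega), Nat.add_sub_cancel_left]

theorem enc_idx3 (a b : ℕ) (i : Fin k) :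
    enc k a b (idx3 k i) = if (2^k - 1 - a - b).testBit i then 2 else 0 := by
  have h1 : ((idx3 k i : Fin (3*k)) : ℕ) = 2*k + (i:ℕ) := rfl
  have hi := i.isLt
  simp only [enc, h1]
  rw [if_neg (by omega), if_neg (by omega), Nat.add_sub_cancel_left]

def decA (v : Fin (3*k) → Fin 3) : ℕ := ∑ i : Fin k, if v (idx1 k i) = 1 then 2^(i:ℕ) else 0
def decB (v : Fin (3*k) → Fin 3) : ℕ := ∑ i : Fin k, if v (idx2 k i) = 2 then 2^(i:ℕ) else 0
def decC (v : Fin (3*k) → Fin 3) : ℕ := ∑ i : Fin k, if v (idx3 k i) = 2 then 2^(i:ℕ) else 0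

theorem dec_lt (v : Fin (3*k) → Fin 3) : decA k v < 2^k ∧ decB k v < 2^k ∧ decC k v < 2^k := by
  have key : ∀ f : Fin k → ℕ, (∀ i, f i ≤ 2^(i:ℕ)) → ∑ i : Fin k, f i < 2^k := by
    intro f hf
    calc ∑ i : Fin k, f i ≤ ∑ i : Fin k, 2^(i:ℕ) := Finset.sum_le_sum fun i _ => hf i
    _ = ∑ i ∈ Finset.range k, 2^i := Fin.sum_univ_eq_sum_range _ _
    _ = 2^k - 1 := by rw [Nat.geomSum_eq (le_refl 2)]; simp
    _ < 2^k := by have := Nat.one_le_two_pow (n := k); omega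
  refine ⟨key _ fun i => ?_, key _ fun i => ?_, key _ fun i => ?_⟩ <;> split <;> simp

theorem decA_enc (a b : ℕ) (ha : a < 2^k) : decA k (enc k a b) = a := by
  rw [decA]
  rw [Finset.sum_congr rfl fun (i : Fin k) _ => show (if enc k a b (idx1 k i) = 1 then 2^(i:ℕ) else 0) = (if a.testBit i then 2^(i:ℕ) else 0) by rw [enc_idx1]; cases h : a.testBit i <;> simp [h]]
  exact sum_testBit k a ha

theorem decB_enc (a b : ℕ) (hb : b < 2^k) : decB k (enc k a b) = b := by
  rw [decB]
  rw [Finset.sum_congr rfl fun (i : Fin k) _ => show (if enc k a b (idx2 k i) = 2 then 2^(i:ℕ) else 0) = (if b.testBit i then 2^(i:ℕ) else 0) by rw [enc_idx2]; cases h : b.testBit i <;> simp [h]]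
  exact sum_testBit k b hb

theorem decC_enc (a b : ℕ) (hc : 2^k - 1 - a - b < 2^k) : decC k (enc k a b) = 2^k - 1 - a - b := by
  rw [decC]
  rw [Finset.sum_congr rfl fun (i : Fin k) _ => show (if enc k a b (idx3 k i) = 2 then 2^(i:ℕ) else 0) = (if (2^k - 1 - a - b).testBit i then 2^(i:ℕ) else 0) by rw [enc_idx3]; cases h : (2^k - 1 - a - b).testBit i <;> simp [h]]
  exact sum_testBit k _ hc

end USPaux

open USPaux Finset in
theorem stmt_10 (k : ℕ) (hk : 1 ≤ k) :
    ∃ U : Finset (Fin (3 * k) → Fin 3),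
      IsStrongUSP (U : Set (Fin (3 * k) → Fin 3)) ∧
      U.card = 2 ^ (k - 1) * (2 ^ k + 1) := by
  classical
  set n := 2^k with hn
  have hn1 : 1 ≤ n := Nat.one_le_two_pow
  set S : Finset (ℕ × ℕ) :=
    (Finset.range n).biUnion (fun a => (Finset.range (n - a)).image (fun b => (a, b))) with hS
  have hmemS : ∀ p : ℕ × ℕ, p ∈ S ↔ p.1 + p.2 < n := by
    rintro ⟨x, y⟩
    simp only [hS, Finset.mem_biUnion, Finset.mem_image, Finset.mem_range, Prod.mk.injEq]
    constructor
    · rintro ⟨a, ha, b, hb, rfl, rfl⟩; omega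
    · intro h; exact ⟨x, by omega, y, by omega, rfl, rfl⟩
  set T : Finset (Fin (3*k) → Fin 3) := S.image (fun p => enc k p.1 p.2) with hT
  have hinj : ∀ p ∈ S, ∀ q ∈ S, enc k p.1 p.2 = enc k q.1 q.2 → p = q := by
    rintro ⟨a, b⟩ hp ⟨a', b'⟩ hq h
    rw [hmemS] at hp hq
    simp only at hp hq ⊢
    have h1 : a = a' := by
      rw [← decA_enc k a b (by omega), ← decA_enc k a' b' (by omega), h]
    have h2 : b = b' := by
      rw [← decB_enc k a b (by omega), ← decB_enc k a' b' (by omega), h]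
    simp [h1, h2]
  refine ⟨T, ?_, ?_⟩
  · -- IsStrongUSP
    set U := ↥(T : Set (Fin (3*k) → Fin 3)) with hU
    intro π₁ π₂ π₃
    by_cases hex : ∃ u : ↥(T : Set (Fin (3*k) → Fin 3)), ∃ i : Fin (3*k),
      ExactlyTwo (((π₁ u : _) : Fin (3*k) → Fin 3) i = 0)
        (((π₂ u : _) : Fin (3*k) → Fin 3) i = 1)
        (((π₃ u : _) : Fin (3*k) → Fin 3) i = 2)
    · exact Or.inr hex
    left
    push_neg at hex
    have hrep : ∀ u : U, ∃ a b : ℕ, a + b < n ∧ (u : Fin (3*k) → Fin 3) = enc k a b := by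
      rintro ⟨v, hv⟩
      have hv' : v ∈ T := hv
      rw [hT, Finset.mem_image] at hv'
      obtain ⟨p, hp, hpe⟩ := hv'
      exact ⟨p.1, p.2, (hmemS p).mp hp, hpe.symm⟩
    -- decoded coordinates sum to n-1
    have habc : ∀ u : U, decA k (u : Fin (3*k) → Fin 3) + decB k (u : _) + decC k (u : _) = n - 1 := by
      intro u
      obtain ⟨a, b, hab, he⟩ := hrep u
      rw [he, decA_enc k a b (by omega), decB_enc k a b (by omega),
        decC_enc k a b (by omega)]
      omega
    -- block 1 inequality
    have key1 : ∀ u : U, decA k ((π₂ u : U) : Fin (3*k) → Fin 3) ≤ decA k ((π₁ u : U) : _) := by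
      intro u
      apply le_of_testBit
      intro i hi
      by_cases hik : i < k
      · obtain ⟨a1, b1, h1, e1⟩ := hrep (π₁ u)
        obtain ⟨a2, b2, h2, e2⟩ := hrep (π₂ u)
        obtain ⟨a3, b3, h3, e3⟩ := hrep (π₃ u)
        have hex' := hex u (idx1 k ⟨i, hik⟩)
        rw [e2, decA_enc k a2 b2 (by omega)] at hi
        rw [e1, decA_enc k a1 b1 (by omega)]
        have hQ : ((π₂ u : U) : Fin (3*k) → Fin 3) (idx1 k ⟨i, hik⟩) = 1 := by
          rw [e2, enc_idx1]; simp [hi]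
        have hR : ((π₃ u : U) : Fin (3*k) → Fin 3) (idx1 k ⟨i, hik⟩) ≠ 2 := by
          rw [e3, enc_idx1]; split <;> decide
        have hP : ((π₁ u : U) : Fin (3*k) → Fin 3) (idx1 k ⟨i, hik⟩) ≠ 0 := by
          intro hP
          exact hex' (Or.inl ⟨hP, hQ, hR⟩)
        rw [e1, enc_idx1] at hP
        by_contra hb
        simp only [Bool.not_eq_true] at hb
        rw [hb] at hP
        simp at hP
      · exfalso
        have hlt : decA k ((π₂ u : U) : Fin (3*k) → Fin 3) < 2^i :=
          lt_of_lt_of_le (dec_lt k _).1 (Nat.pow_le_pow_right (by norm_num) (by omega))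
        rw [Nat.testBit_eq_false_of_lt hlt] at hi
        exact Bool.false_ne_true hi
    -- block 2 inequality
    have key2 : ∀ u : U, decB k ((π₃ u : U) : Fin (3*k) → Fin 3) ≤ decB k ((π₂ u : U) : _) := by
      intro u
      apply le_of_testBit
      intro i hi
      by_cases hik : i < k
      · obtain ⟨a1, b1, h1, e1⟩ := hrep (π₁ u)
        obtain ⟨a2, b2, h2, e2⟩ := hrep (π₂ u)
        obtain ⟨a3, b3, h3, e3⟩ := hrep (π₃ u)
        have hex' := hex u (idx2 k ⟨i, hik⟩)
        rw [e3, decB_enc k a3 b3 (by omega)] at hi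
        rw [e2, decB_enc k a2 b2 (by omega)]
        have hR : ((π₃ u : U) : Fin (3*k) → Fin 3) (idx2 k ⟨i, hik⟩) = 2 := by
          rw [e3, enc_idx2]; simp [hi]
        have hP : ((π₁ u : U) : Fin (3*k) → Fin 3) (idx2 k ⟨i, hik⟩) ≠ 0 := by
          rw [e1, enc_idx2]; split <;> decide
        have hQ : ((π₂ u : U) : Fin (3*k) → Fin 3) (idx2 k ⟨i, hik⟩) ≠ 1 := by
          intro hQ
          exact hex' (Or.inr (Or.inr ⟨hP, hQ, hR⟩))
        rw [e2, enc_idx2] at hQ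
        by_contra hb
        simp only [Bool.not_eq_true] at hb
        rw [hb] at hQ
        simp at hQ
      · exfalso
        have hlt : decB k ((π₃ u : U) : Fin (3*k) → Fin 3) < 2^i :=
          lt_of_lt_of_le (dec_lt k _).2.1 (Nat.pow_le_pow_right (by norm_num) (by omega))
        rw [Nat.testBit_eq_false_of_lt hlt] at hi
        exact Bool.false_ne_true hi
    -- block 3 inequality
    have key3 : ∀ u : U, decC k ((π₃ u : U) : Fin (3*k) → Fin 3) ≤ decC k ((π₁ u : U) : _) := by
      intro u
      apply le_of_testBit
      intro i hi
      by_cases hik : i < k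
      · obtain ⟨a1, b1, h1, e1⟩ := hrep (π₁ u)
        obtain ⟨a2, b2, h2, e2⟩ := hrep (π₂ u)
        obtain ⟨a3, b3, h3, e3⟩ := hrep (π₃ u)
        have hex' := hex u (idx3 k ⟨i, hik⟩)
        rw [e3, decC_enc k a3 b3 (by omega)] at hi
        rw [e1, decC_enc k a1 b1 (by omega)]
        have hR : ((π₃ u : U) : Fin (3*k) → Fin 3) (idx3 k ⟨i, hik⟩) = 2 := by
          rw [e3, enc_idx3]; simp [hi]
        have hQ : ((π₂ u : U) : Fin (3*k) → Fin 3) (idx3 k ⟨i, hik⟩) ≠ 1 := by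
          rw [e2, enc_idx3]; split <;> decide
        have hP : ((π₁ u : U) : Fin (3*k) → Fin 3) (idx3 k ⟨i, hik⟩) ≠ 0 := by
          intro hP
          exact hex' (Or.inr (Or.inl ⟨hP, hQ, hR⟩))
        rw [e1, enc_idx3] at hP
        by_contra hb
        simp only [Bool.not_eq_true] at hb
        rw [hb] at hP
        simp at hP
      · exfalso
        have hlt : decC k ((π₃ u : U) : Fin (3*k) → Fin 3) < 2^i :=
          lt_of_lt_of_le (dec_lt k _).2.2 (Nat.pow_le_pow_right (by norm_num) (by omega))
        rw [Nat.testBit_eq_false_of_lt hlt] at hi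
        exact Bool.false_ne_true hi
    -- permutation sums
    have sumCompN : ∀ (f : (Fin (3*k) → Fin 3) → ℕ) (π : Equiv.Perm U),
        ∑ u : U, f ((π u : U) : Fin (3*k) → Fin 3) = ∑ u : U, f (u : Fin (3*k) → Fin 3) :=
      fun f π => Equiv.sum_comp π (fun u : U => f (u : Fin (3*k) → Fin 3))
    have sumCompZ : ∀ (f : (Fin (3*k) → Fin 3) → ℤ) (π : Equiv.Perm U),
        ∑ u : U, f ((π u : U) : Fin (3*k) → Fin 3) = ∑ u : U, f (u : Fin (3*k) → Fin 3) :=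
      fun f π => Equiv.sum_comp π (fun u : U => f (u : Fin (3*k) → Fin 3))
    have eqA : ∀ u : U, decA k ((π₂ u : U) : Fin (3*k) → Fin 3) = decA k ((π₁ u : U) : _) := by
      have hsum : ∑ u : U, decA k ((π₂ u : U) : Fin (3*k) → Fin 3)
          = ∑ u : U, decA k ((π₁ u : U) : Fin (3*k) → Fin 3) := by
        rw [sumCompN (decA k) π₂, sumCompN (decA k) π₁]
      have := (Finset.sum_eq_sum_iff_of_le (fun u _ => key1 u)).mp hsum
      exact fun u => this u (Finset.mem_univ u)
    have eqB : ∀ u : U, decB k ((π₃ u : U) : Fin (3*k) → Fin 3) = decB k ((π₂ u : U) : _) := by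
      have hsum : ∑ u : U, decB k ((π₃ u : U) : Fin (3*k) → Fin 3)
          = ∑ u : U, decB k ((π₂ u : U) : Fin (3*k) → Fin 3) := by
        rw [sumCompN (decB k) π₃, sumCompN (decB k) π₂]
      have := (Finset.sum_eq_sum_iff_of_le (fun u _ => key2 u)).mp hsum
      exact fun u => this u (Finset.mem_univ u)
    have eqC : ∀ u : U, decC k ((π₃ u : U) : Fin (3*k) → Fin 3) = decC k ((π₁ u : U) : _) := by
      have hsum : ∑ u : U, decC k ((π₃ u : U) : Fin (3*k) → Fin 3)
          = ∑ u : U, decC k ((π₁ u : U) : Fin (3*k) → Fin 3) := by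
        rw [sumCompN (decC k) π₃, sumCompN (decC k) π₁]
      have := (Finset.sum_eq_sum_iff_of_le (fun u _ => key3 u)).mp hsum
      exact fun u => this u (Finset.mem_univ u)
    -- integer stage
    set A1 : U → ℤ := fun u => (decA k ((π₁ u : U) : Fin (3*k) → Fin 3) : ℤ) with hA1
    set B1 : U → ℤ := fun u => (decB k ((π₁ u : U) : Fin (3*k) → Fin 3) : ℤ) with hB1
    set C1 : U → ℤ := fun u => (decC k ((π₁ u : U) : Fin (3*k) → Fin 3) : ℤ) with hC1
    set B2 : U → ℤ := fun u => (decB k ((π₂ u : U) : Fin (3*k) → Fin 3) : ℤ) with hB2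
    set C2 : U → ℤ := fun u => (decC k ((π₂ u : U) : Fin (3*k) → Fin 3) : ℤ) with hC2
    set A3 : U → ℤ := fun u => (decA k ((π₃ u : U) : Fin (3*k) → Fin 3) : ℤ) with hA3
    set g : U → ℤ := fun u => B1 u - B2 u with hg
    have hrel : ∀ u : U, C2 u = C1 u + g u ∧ A3 u = A1 u + g u ∧ B2 u = B1 u - g u := by
      intro u
      have e1 := habc (π₁ u)
      have e2 := habc (π₂ u)
      have e3 := habc (π₃ u)
      have eA := eqA u
      have eB := eqB u
      have eC := eqC u
      simp only [hA1, hB1, hC1, hB2, hC2, hA3, hg]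
      omega
    -- sum identities
    have S1 : ∑ u : U, (B2 u)^2 = ∑ u : U, (B1 u)^2 := by
      simp only [hB1, hB2]
      rw [sumCompZ (fun v => (decB k v : ℤ)^2) π₂, sumCompZ (fun v => (decB k v : ℤ)^2) π₁]
    have S2 : ∑ u : U, (C2 u)^2 = ∑ u : U, (C1 u)^2 := by
      simp only [hC1, hC2]
      rw [sumCompZ (fun v => (decC k v : ℤ)^2) π₂, sumCompZ (fun v => (decC k v : ℤ)^2) π₁]
    have S3 : ∑ u : U, (A3 u)^2 = ∑ u : U, (A1 u)^2 := by
      simp only [hA1, hA3]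
      rw [sumCompZ (fun v => (decA k v : ℤ)^2) π₃, sumCompZ (fun v => (decA k v : ℤ)^2) π₁]
    have Sg : ∑ u : U, g u = 0 := by
      have : ∑ u : U, g u = (∑ u : U, B1 u) - ∑ u : U, B2 u := by
        rw [← Finset.sum_sub_distrib]
      rw [this]
      simp only [hB1, hB2]
      rw [sumCompZ (fun v => (decB k v : ℤ)) π₂, sumCompZ (fun v => (decB k v : ℤ)) π₁]
      ring
    have r1 : ∑ u : U, (g u)^2 = 2 * ∑ u : U, B1 u * g u := by
      have expand : ∑ u : U, (B2 u)^2
          = (∑ u : U, (B1 u)^2 - 2 * ∑ u : U, B1 u * g u) + ∑ u : U, (g u)^2 := by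
        rw [Finset.mul_sum, ← Finset.sum_sub_distrib, ← Finset.sum_add_distrib]
        refine Finset.sum_congr rfl fun u _ => ?_
        rw [(hrel u).2.2]; ring
      rw [expand] at S1
      linarith
    have r2 : ∑ u : U, (g u)^2 = -(2 * ∑ u : U, C1 u * g u) := by
      have expand : ∑ u : U, (C2 u)^2
          = (∑ u : U, (C1 u)^2 + 2 * ∑ u : U, C1 u * g u) + ∑ u : U, (g u)^2 := by
        rw [Finset.mul_sum, ← Finset.sum_add_distrib, ← Finset.sum_add_distrib]
        refine Finset.sum_congr rfl fun u _ => ?_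
        rw [(hrel u).1]; ring
      rw [expand] at S2
      linarith
    have r3 : ∑ u : U, (g u)^2 = -(2 * ∑ u : U, A1 u * g u) := by
      have expand : ∑ u : U, (A3 u)^2
          = (∑ u : U, (A1 u)^2 + 2 * ∑ u : U, A1 u * g u) + ∑ u : U, (g u)^2 := by
        rw [Finset.mul_sum, ← Finset.sum_add_distrib, ← Finset.sum_add_distrib]
        refine Finset.sum_congr rfl fun u _ => ?_
        rw [(hrel u).2.1]; ring
      rw [expand] at S3
      linarith
    have r4 : ∑ u : U, A1 u * g u + ∑ u : U, B1 u * g u + ∑ u : U, C1 u * g u = 0 := by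
      have habc1 : ∀ u : U, A1 u + B1 u + C1 u = ((n : ℤ) - 1) := by
        intro u
        have := habc (π₁ u)
        simp only [hA1, hB1, hC1]
        omega
      have : ∑ u : U, (A1 u * g u + B1 u * g u + C1 u * g u)
          = ∑ u : U, ((n : ℤ) - 1) * g u := by
        refine Finset.sum_congr rfl fun u _ => ?_
        rw [← habc1 u]; ring
      rw [← Finset.sum_add_distrib, ← Finset.sum_add_distrib, this, ← Finset.mul_sum, Sg,
        mul_zero]
    have hg0 : ∑ u : U, (g u)^2 = 0 := by linarith
    have hgz : ∀ u : U, g u = 0 := by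
      intro u
      have := (Finset.sum_eq_zero_iff_of_nonneg (fun v _ => sq_nonneg (g v))).mp hg0 u
        (Finset.mem_univ u)
      exact pow_eq_zero_iff (by norm_num) |>.mp this
    -- conclude equality of permutations
    have coord_eq : ∀ v w : U, decA k (v : Fin (3*k) → Fin 3) = decA k (w : _) →
        decB k (v : Fin (3*k) → Fin 3) = decB k (w : _) → v = w := by
      intro v w hA hB
      obtain ⟨a, b, hab, he⟩ := hrep v
      obtain ⟨a', b', hab', he'⟩ := hrep w
      rw [he, he', decA_enc k a b (by omega), decA_enc k a' b' (by omega)] at hA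
      rw [he, he', decB_enc k a b (by omega), decB_enc k a' b' (by omega)] at hB
      apply Subtype.ext
      rw [he, he', hA, hB]
    have h21 : ∀ u : U, π₂ u = π₁ u := by
      intro u
      have hBeq : decB k ((π₂ u : U) : Fin (3*k) → Fin 3) = decB k ((π₁ u : U) : _) := by
        have := hgz u
        simp only [hg, hB1, hB2, sub_eq_zero] at this
        exact_mod_cast this.symm
      exact coord_eq _ _ (eqA u) hBeq
    have h31 : ∀ u : U, π₃ u = π₁ u := by
      intro u
      have hAeq : decA k ((π₃ u : U) : Fin (3*k) → Fin 3) = decA k ((π₁ u : U) : _) := by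
        have h := (hrel u).2.1
        rw [hgz u, add_zero] at h
        simp only [hA3, hA1] at h
        exact_mod_cast h
      have hBeq : decB k ((π₃ u : U) : Fin (3*k) → Fin 3) = decB k ((π₁ u : U) : _) := by
        rw [eqB u]
        have := hgz u
        simp only [hg, hB1, hB2, sub_eq_zero] at this
        exact_mod_cast this.symm
      exact coord_eq _ _ hAeq hBeq
    constructor
    · exact Equiv.ext fun u => (h21 u).symm
    · exact Equiv.ext fun u => (h21 u).trans (h31 u).symm
  · -- cardinality
    rw [hT, Finset.card_image_of_injOn (fun p hp q hq h => hinj p hp q hq h), hS,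
      Finset.card_biUnion]
    · have hcard : ∀ a ∈ Finset.range n, ((Finset.range (n - a)).image (fun b => (a, b))).card
          = n - a := by
        intro a _
        rw [Finset.card_image_of_injective _ (fun x y h => by simpa using h),
          Finset.card_range]
      rw [Finset.sum_congr rfl hcard]
      have hrefl : ∑ a ∈ Finset.range n, (n - a) = ∑ a ∈ Finset.range n, (a + 1) := by
        have := Finset.sum_range_reflect (fun a => a + 1) n
        rw [← this]
        refine Finset.sum_congr rfl fun j hj => ?_
        rw [Finset.mem_range] at hj
        omega
      rw [hrefl]
      have key : (∑ a ∈ Finset.range n, (a + 1)) * 2 = (n + 1) * n := by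
        have hshift := Finset.sum_range_succ' (fun i => i) n
        have hg := Finset.sum_range_id_mul_two (n + 1)
        simp only [add_zero] at hshift
        rw [← hshift]
        simpa using hg
      have hnm : n = 2 * 2^(k-1) := by
        rw [hn, mul_comm, ← pow_succ]
        congr 1
        omega
      refine Nat.eq_of_mul_eq_mul_right (by norm_num : 0 < 2) ?_
      rw [key, hnm]
      ring
    · intro a _ b _ hab
      simp only [Finset.disjoint_left, Finset.mem_image, Finset.mem_range]
      rintro ⟨x, y⟩ ⟨c, hc, hc2⟩ ⟨d, hd, hd2⟩
      simp only [Prod.mk.injEq] at hc2 hd2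
      omega
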